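/- Let A and B be self-adjoint operators bounded below with discrete spectra below a value κ, arising as the Neumann Laplacians on two disjoint open pieces D₁, D₂ obtained by cutting a domain D along a hypersurface. Then for any κ > 0, the number of eigenvalues of the Laplacian on D below κ is at most the number of eigenvalues on D₁ below κ plus the number of eigenvalues on D₂ below κ. -/

import Mathlib

/-!
Let `F ⊆ H` and `Fᵢ ⊆ Hᵢ` be the spans of the eigenvectors with eigenvalue `< κ`. On each of them
the form is `< κ‖·‖²` away from `0`, and by min-max `Fᵢ` has maximal dimension among subspaces of
`Hᵢ` with this property. Hence `κ‖g‖² ≤ ⟪Aᵢ g, g⟫` for `g ⊥ Fᵢ`: otherwise `Fᵢ ⊕ ℝ g` would be a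
larger such subspace, the cross terms vanishing because `Fᵢ` is `Aᵢ`-invariant. So if `x ∈ F` and
`J x ∈ F₁ᗮ × F₂ᗮ`, then `κ‖x‖² ≤ ⟪A x, x⟫`, forcing `x = 0`: orthogonal projection embeds `F`
into `F₁ × F₂`.
-/

open Module Submodule
open scoped RealInnerProductSpace

-- `E × F` carries the sup norm, so this is not an equality.
theorem sq_norm_le_sq_norm_fst_add_sq_norm_snd {E F : Type*} [SeminormedAddCommGroup E]
    [SeminormedAddCommGroup F] (p : E × F) : ‖p‖ ^ 2 ≤ ‖p.1‖ ^ 2 + ‖p.2‖ ^ 2 := by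
  rw [Prod.norm_def]
  rcases le_total ‖p.1‖ ‖p.2‖ with h | h
  · rw [max_eq_right h]; nlinarith [sq_nonneg ‖p.1‖]
  · rw [max_eq_left h]; nlinarith [sq_nonneg ‖p.2‖]

section

variable {E : Type*} [NormedAddCommGroup E] [InnerProductSpace ℝ E]

def eigenspacesBelow (T : E →ₗ[ℝ] E) (κ : ℝ) : Submodule ℝ E :=
  ⨆ μ ∈ Set.Iio κ, End.eigenspace T μ

def FormLtOn (T : E →ₗ[ℝ] E) (κ : ℝ) (V : Submodule ℝ E) : Prop :=
  ∀ f ∈ V, f ≠ 0 → ⟪T f, f⟫ < κ * ‖f‖ ^ 2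

variable {T : E →ₗ[ℝ] E} {κ : ℝ} {V W : Submodule ℝ E}

theorem FormLtOn.mono (hW : FormLtOn T κ W) (hVW : V ≤ W) : FormLtOn T κ V :=
  fun f hf => hW f (hVW hf)

theorem FormLtOn.inner_map_self_le (hV : FormLtOn T κ V) {f : E} (hf : f ∈ V) :
    ⟪T f, f⟫ ≤ κ * ‖f‖ ^ 2 := by
  rcases eq_or_ne f 0 with rfl | hf0
  · simp
  · exact (hV f hf hf0).le

theorem formLtOn_span_singleton {g : E} (hg : ⟪T g, g⟫ < κ * ‖g‖ ^ 2) :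
    FormLtOn T κ (ℝ ∙ g) := by
  rintro _ hf hf0
  obtain ⟨c, rfl⟩ := mem_span_singleton.mp hf
  have hc : c ≠ 0 := by rintro rfl; simp at hf0
  calc ⟪T (c • g), c • g⟫ = c ^ 2 * ⟪T g, g⟫ := by
        rw [map_smul, real_inner_smul_left, real_inner_smul_right]; ring
    _ < c ^ 2 * (κ * ‖g‖ ^ 2) := by gcongr
    _ = κ * ‖c • g‖ ^ 2 := by rw [norm_smul, mul_pow, Real.norm_eq_abs, sq_abs]; ring

theorem FormLtOn.sup_orthogonal (hT : T.IsSymmetric) (hV : FormLtOn T κ V)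
    (hTV : ∀ x ∈ V, T x ∈ V) (hW : FormLtOn T κ W) (hWV : W ≤ Vᗮ) :
    FormLtOn T κ (V ⊔ W) := by
  rintro _ hf hf0
  obtain ⟨v, hv, w, hw, rfl⟩ := mem_sup.mp hf
  have hvw : ⟪v, w⟫ = 0 := inner_right_of_mem_orthogonal hv (hWV hw)
  have hTvw : ⟪T v, w⟫ = 0 := inner_right_of_mem_orthogonal (hTV v hv) (hWV hw)
  have hform : ⟪T (v + w), v + w⟫ = ⟪T v, v⟫ + ⟪T w, w⟫ := by
    rw [map_add, inner_add_left, inner_add_right, inner_add_right, hTvw, hT w v,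
      real_inner_comm (T v) w, hTvw]
    ring
  rw [hform, norm_add_sq_real, hvw, mul_zero, add_zero, mul_add]
  rcases eq_or_ne v 0 with rfl | hv0
  · simpa using hW w hw (by simpa using hf0)
  · exact add_lt_add_of_lt_of_le (hV v hv hv0) (hW.inner_map_self_le hw)

theorem map_mem_eigenspacesBelow {x : E} (hx : x ∈ eigenspacesBelow T κ) :
    T x ∈ eigenspacesBelow T κ := by
  suffices eigenspacesBelow T κ ≤ (eigenspacesBelow T κ).comap T from this hx
  refine iSup₂_le fun μ hμ y hy => ?_
  rw [mem_comap, End.mem_eigenspace_iff.mp hy]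
  exact smul_mem _ _ (le_biSup (fun μ => End.eigenspace T μ) hμ hy)

theorem formLtOn_eigenspacesBelow (hT : T.IsSymmetric) : FormLtOn T κ (eigenspacesBelow T κ) := by
  intro x hx hx0
  have hV := hT.orthogonalFamily_eigenspaces.comp (Subtype.val_injective (p := (· ∈ Set.Iio κ)))
  rw [eigenspacesBelow, iSup_subtype', mem_iSup_iff_exists_finsupp] at hx
  obtain ⟨f, hf, rfl⟩ := hx
  let l : ∀ μ : Set.Iio κ, End.eigenspace T μ := fun μ => ⟨f μ, hf μ⟩
  have hTl : ∀ μ, T (f μ) = (μ : ℝ) • f μ := fun μ => End.mem_eigenspace_iff.mp (hf μ)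
  have hform : ⟪T (f.sum fun _ v => v), f.sum fun _ v => v⟫ =
      ∑ μ ∈ f.support, (μ : ℝ) * ‖f μ‖ ^ 2 := by
    have := hV.inner_sum (fun μ => (μ : ℝ) • l μ) l f.support
    simp only [Finsupp.sum, map_sum, hTl]
    simpa [l, real_inner_smul_left, real_inner_self_eq_norm_sq] using this
  have hnorm : ‖f.sum fun _ v => v‖ ^ 2 = ∑ μ ∈ f.support, ‖f μ‖ ^ 2 := by
    simpa [l, Finsupp.sum] using hV.norm_sum l f.support
  obtain ⟨μ₀, hμ₀⟩ : f.support.Nonempty := by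
    rw [Finset.nonempty_iff_ne_empty]
    rintro h
    simp [Finsupp.sum, h] at hx0
  rw [hform, hnorm, Finset.mul_sum]
  refine Finset.sum_lt_sum (fun μ _ => by gcongr; exact μ.2.le) ⟨μ₀, hμ₀, ?_⟩
  have : f μ₀ ≠ 0 := Finsupp.mem_support_iff.mp hμ₀
  gcongr
  exact μ₀.2

theorem finiteDimensional_eigenspacesBelow (hT : T.IsSymmetric)
    (hmax : ∀ V, FormLtOn T κ V → finrank ℝ V ≤ finrank ℝ (eigenspacesBelow T κ)) :
    FiniteDimensional ℝ (eigenspacesBelow T κ) := by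
  by_contra hfin
  have hne : eigenspacesBelow T κ ≠ ⊥ := by
    rintro h
    exact hfin (h ▸ inferInstance)
  obtain ⟨x, hx, hx0⟩ := exists_mem_ne_zero_of_ne_bot hne
  have := hmax _ ((formLtOn_eigenspacesBelow hT).mono ((span_singleton_le_iff_mem x _).mpr hx))
  rw [finrank_span_singleton hx0, finrank_of_infinite_dimensional hfin] at this
  omega

theorem le_inner_map_self_of_mem_orthogonal_eigenspacesBelow (hT : T.IsSymmetric)
    (hmax : ∀ V, FormLtOn T κ V → finrank ℝ V ≤ finrank ℝ (eigenspacesBelow T κ))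
    {g : E} (hg : g ∈ (eigenspacesBelow T κ)ᗮ) : κ * ‖g‖ ^ 2 ≤ ⟪T g, g⟫ := by
  by_contra! hlt
  have hg0 : g ≠ 0 := by rintro rfl; simp at hlt
  have := finiteDimensional_eigenspacesBelow hT hmax
  have hsup : FormLtOn T κ (eigenspacesBelow T κ ⊔ ℝ ∙ g) :=
    (formLtOn_eigenspacesBelow hT).sup_orthogonal hT (fun _ => map_mem_eigenspacesBelow)
      (formLtOn_span_singleton hlt) ((span_singleton_le_iff_mem g _).mpr hg)
  have hgF : g ∉ eigenspacesBelow T κ := fun h => hg0 (inner_self_eq_zero.mp (hg g h))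
  have := finrank_lt_finrank_of_lt (left_lt_sup.mpr ((span_singleton_le_iff_mem g _).not.mpr hgF))
  exact (hmax _ hsup).not_gt this

theorem eq_zero_of_mem_eigenspacesBelow_of_le (hT : T.IsSymmetric) {x : E}
    (hx : x ∈ eigenspacesBelow T κ) (hle : κ * ‖x‖ ^ 2 ≤ ⟪T x, x⟫) : x = 0 :=
  by_contra fun hx0 => (formLtOn_eigenspacesBelow hT x hx hx0).not_ge hle

end

theorem neumann_bracketing_eigenvalue_count_general
    {H H₁ H₂ : Type*} [NormedAddCommGroup H] [InnerProductSpace ℝ H]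
    [NormedAddCommGroup H₁] [InnerProductSpace ℝ H₁]
    [NormedAddCommGroup H₂] [InnerProductSpace ℝ H₂]
    (A : H →ₗ[ℝ] H) (A₁ : H₁ →ₗ[ℝ] H₁) (A₂ : H₂ →ₗ[ℝ] H₂)
    (hA : ∀ x y : H, (inner ℝ (A x) y : ℝ) = inner ℝ x (A y))
    (hA₁ : ∀ x y : H₁, (inner ℝ (A₁ x) y : ℝ) = inner ℝ x (A₁ y))
    (hA₂ : ∀ x y : H₂, (inner ℝ (A₂ x) y : ℝ) = inner ℝ x (A₂ y))
    (J : H →ₗᵢ[ℝ] H₁ × H₂)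
    (hform : ∀ f : H,
      (inner ℝ (A f) f : ℝ) = inner ℝ (A₁ (J f).1) (J f).1 + inner ℝ (A₂ (J f).2) (J f).2)
    (κ : ℝ) (hκ : 0 < κ) (k₁ k₂ : ℕ)
    (hk₁ : Module.finrank ℝ
      ↥(⨆ μ ∈ Set.Iio κ, Module.End.eigenspace (A₁ : Module.End ℝ H₁) μ) = k₁)
    (hk₂ : Module.finrank ℝ
      ↥(⨆ μ ∈ Set.Iio κ, Module.End.eigenspace (A₂ : Module.End ℝ H₂) μ) = k₂)
    (hdisc₁ : ∀ V : Submodule ℝ H₁,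
      (∀ f ∈ V, f ≠ 0 → (inner ℝ (A₁ f) f : ℝ) < κ * ‖f‖ ^ 2) → Module.finrank ℝ V ≤ k₁)
    (hdisc₂ : ∀ V : Submodule ℝ H₂,
      (∀ f ∈ V, f ≠ 0 → (inner ℝ (A₂ f) f : ℝ) < κ * ‖f‖ ^ 2) → Module.finrank ℝ V ≤ k₂) :
    Module.finrank ℝ
      ↥(⨆ μ ∈ Set.Iio κ, Module.End.eigenspace (A : Module.End ℝ H) μ) ≤ k₁ + k₂ := by
  have hmax₁ : ∀ V, FormLtOn A₁ κ V → finrank ℝ V ≤ finrank ℝ (eigenspacesBelow A₁ κ) :=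
    fun V hV => (hdisc₁ V hV).trans hk₁.ge
  have hmax₂ : ∀ V, FormLtOn A₂ κ V → finrank ℝ V ≤ finrank ℝ (eigenspacesBelow A₂ κ) :=
    fun V hV => (hdisc₂ V hV).trans hk₂.ge
  have := finiteDimensional_eigenspacesBelow hA₁ hmax₁
  have := finiteDimensional_eigenspacesBelow hA₂ hmax₂
  let P : eigenspacesBelow A κ →ₗ[ℝ] eigenspacesBelow A₁ κ × eigenspacesBelow A₂ κ :=
    (orthogonalProjectionOnto _).toLinearMap.prodMap (orthogonalProjectionOnto _).toLinearMap ∘ₗ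
      J.toLinearMap ∘ₗ (eigenspacesBelow A κ).subtype
  have hP : Function.Injective P := by
    rw [injective_iff_map_eq_zero]
    rintro ⟨x, hx⟩ hPx
    obtain ⟨h₁, h₂⟩ : (J x).1 ∈ (eigenspacesBelow A₁ κ)ᗮ ∧ (J x).2 ∈ (eigenspacesBelow A₂ κ)ᗮ := by
      simpa [P, Prod.ext_iff, orthogonalProjectionOnto_eq_zero_iff] using hPx
    refine Subtype.ext (eq_zero_of_mem_eigenspacesBelow_of_le hA hx ?_)
    calc κ * ‖x‖ ^ 2 = κ * ‖J x‖ ^ 2 := by rw [J.norm_map]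
      _ ≤ κ * ‖(J x).1‖ ^ 2 + κ * ‖(J x).2‖ ^ 2 := by
        rw [← mul_add]; gcongr; exact sq_norm_le_sq_norm_fst_add_sq_norm_snd _
      _ ≤ ⟪A₁ (J x).1, (J x).1⟫ + ⟪A₂ (J x).2, (J x).2⟫ :=
        add_le_add (le_inner_map_self_of_mem_orthogonal_eigenspacesBelow hA₁ hmax₁ h₁)
          (le_inner_map_self_of_mem_orthogonal_eigenspacesBelow hA₂ hmax₂ h₂)
      _ = ⟪A x, x⟫ := (hform x).symm
  calc finrank ℝ (eigenspacesBelow A κ)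
      ≤ finrank ℝ (eigenspacesBelow A₁ κ × eigenspacesBelow A₂ κ) :=
        P.finrank_le_finrank_of_injective hP
    _ = k₁ + k₂ := by rw [finrank_prod, ← hk₁, ← hk₂]; rfl

/-- Courant–Hilbert domain decomposition (Neumann bracketing), abstractly: `A` is the
(nonnegative, symmetric) Laplacian on `L²(D)`, and the restriction map `J` to
`L²(D₁) × L²(D₂)` is an isometry along which the quadratic form of `A` decomposes as the
sum of the forms of the Neumann Laplacians `A₁`, `A₂` on the two pieces. If each `Aᵢ` has
exactly `kᵢ` eigenvalues (with multiplicity) below `κ`, characterized by the min-max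
principle, then `A` has at most `k₁ + k₂` eigenvalues below `κ`. -/
theorem neumann_bracketing_eigenvalue_count
    {H H₁ H₂ : Type*} [NormedAddCommGroup H] [InnerProductSpace ℝ H]
    [NormedAddCommGroup H₁] [InnerProductSpace ℝ H₁]
    [NormedAddCommGroup H₂] [InnerProductSpace ℝ H₂]
    (A : H →ₗ[ℝ] H) (A₁ : H₁ →ₗ[ℝ] H₁) (A₂ : H₂ →ₗ[ℝ] H₂)
    (hA : ∀ x y : H, (inner ℝ (A x) y : ℝ) = inner ℝ x (A y))
    (hA₁ : ∀ x y : H₁, (inner ℝ (A₁ x) y : ℝ) = inner ℝ x (A₁ y))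
    (hA₂ : ∀ x y : H₂, (inner ℝ (A₂ x) y : ℝ) = inner ℝ x (A₂ y))
    (hA0 : ∀ x : H, 0 ≤ (inner ℝ (A x) x : ℝ))
    (hA₁0 : ∀ x : H₁, 0 ≤ (inner ℝ (A₁ x) x : ℝ))
    (hA₂0 : ∀ x : H₂, 0 ≤ (inner ℝ (A₂ x) x : ℝ))
    (J : H →ₗᵢ[ℝ] H₁ × H₂)
    (hform : ∀ f : H,
      (inner ℝ (A f) f : ℝ) = inner ℝ (A₁ (J f).1) (J f).1 + inner ℝ (A₂ (J f).2) (J f).2)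
    (κ : ℝ) (hκ : 0 < κ) (k₁ k₂ : ℕ)
    (hk₁ : Module.finrank ℝ
      ↥(⨆ μ ∈ Set.Iio κ, Module.End.eigenspace (A₁ : Module.End ℝ H₁) μ) = k₁)
    (hk₂ : Module.finrank ℝ
      ↥(⨆ μ ∈ Set.Iio κ, Module.End.eigenspace (A₂ : Module.End ℝ H₂) μ) = k₂)
    (hdisc₁ : ∀ V : Submodule ℝ H₁,
      (∀ f ∈ V, f ≠ 0 → (inner ℝ (A₁ f) f : ℝ) < κ * ‖f‖ ^ 2) → Module.finrank ℝ V ≤ k₁)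
    (hdisc₂ : ∀ V : Submodule ℝ H₂,
      (∀ f ∈ V, f ≠ 0 → (inner ℝ (A₂ f) f : ℝ) < κ * ‖f‖ ^ 2) → Module.finrank ℝ V ≤ k₂) :
    Module.finrank ℝ
      ↥(⨆ μ ∈ Set.Iio κ, Module.End.eigenspace (A : Module.End ℝ H) μ) ≤ k₁ + k₂ :=
  neumann_bracketing_eigenvalue_count_general A A₁ A₂ hA hA₁ hA₂ J hform κ hκ k₁ k₂ hk₁ hk₂ hdisc₁
    hdisc₂
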